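/- Let W_0 and W_1 be nonempty disjoint sets of nonnegative integers with W_0 ∪ W_1 = ℕ₀, such that both W_0 and W_1 contain infinitely many pairs of consecutive integers. Let (g_i)_{i=0}^∞ be a G-adic sequence. Then the set A = A_G(W_0) ∪ A_G(W_1) is a minimal asymptotic basis of order 2. -/

import Mathlib

open Finset

/-- A `𝒢`-adic sequence: strictly increasing, `g 0 = 1`, and `g i ∣ g (i+1)` for all `i`. -/
def GadicSeq (g : ℕ → ℕ) : Prop :=
  StrictMono g ∧ g 0 = 1 ∧ ∀ i, g i ∣ g (i + 1)

/-- The set `A_𝒢(W)` of positive integers `∑_{j ∈ F} x j * g j` with `F` a nonempty finite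
subset of `W` and `x j ∈ [1, d_{j+1} - 1]` where `d_{j+1} = g (j+1) / g j`. -/
def AG (g : ℕ → ℕ) (W : Set ℕ) : Set ℕ :=
  { n | ∃ (F : Finset ℕ) (x : ℕ → ℕ), F.Nonempty ∧ ↑F ⊆ W ∧
        (∀ j ∈ F, 1 ≤ x j ∧ x j ≤ g (j + 1) / g j - 1) ∧
        n = ∑ j ∈ F, x j * g j }

/-- `n` is a sum of `h` (not necessarily distinct) elements of `A`. -/
def IsSumOf (A : Set ℕ) (h n : ℕ) : Prop :=
  ∃ f : Fin h → ℕ, (∀ i, f i ∈ A) ∧ n = ∑ i, f i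

/-- `A` is an asymptotic basis of order `h`. -/
def AsympBasis (h : ℕ) (A : Set ℕ) : Prop :=
  ∃ N, ∀ n ≥ N, IsSumOf A h n

/-- `A` is a minimal asymptotic basis of order `h`. -/
def MinAsympBasis (h : ℕ) (A : Set ℕ) : Prop :=
  AsympBasis h A ∧ ∀ B ⊂ A, ¬ AsympBasis h B

/-!
Every `n` has a unique expansion `n = ∑ cᵢ gᵢ` with digits `0 ≤ cᵢ < dᵢ₊₁`, and `A_G(W)` is the
set of positive integers all of whose nonzero digits sit in `W`. Splitting the expansion of `n`
along `W₀` and `W₁` writes every `n ≥ 2` as a sum of two elements of `A`; when all digits of `n`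
lie on one side, one digit is split off instead, and `gⱼ` itself is `gⱼ₋₁ + (dⱼ - 1) gⱼ₋₁`.

For minimality, let `a₀ ∈ A_G(W₀)` have a nonzero digit at `J`, pick a large `m` with
`m, m + 1 ∈ W₁`, and let `b₀ ∈ A_G(W₁)` have the digit `dᵢ₊₁ - 1` at `m + 1` and at every
`i < J` in `W₁`. In any representation `a₀ + b₀ = a + b` with `a, b ∈ A`:
* if `a, b ∈ A_G(W₀)`, both have zero digits at `m` and `m + 1`, so no carry reaches `m + 1` and
  the sum has digit `0` there;
* if `a, b ∈ A_G(W₁)`, no carry arises below `J`, since at each such position either both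
  summands have digit `0` or the sum has digit `dᵢ₊₁ - 1`; so the sum has digit `0` at `J`;
* otherwise the summands add without carries, and reading off the digits on `W₀` gives `a₀`.
-/

namespace GadicSeq

variable {g : ℕ → ℕ}

/-- The paper's `dᵢ₊₁`. -/
def quot (g : ℕ → ℕ) (i : ℕ) : ℕ := g (i + 1) / g i

def digit (g : ℕ → ℕ) (i n : ℕ) : ℕ := n % g (i + 1) / g i

/-- The carry into position `k` when `a` and `b` are added digit by digit. -/
def carry (g : ℕ → ℕ) (a b k : ℕ) : ℕ := (a % g k + b % g k) / g k

theorem pos (hg : GadicSeq g) (i : ℕ) : 0 < g i := by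
  have := hg.1.monotone (Nat.zero_le i)
  rw [hg.2.1] at this
  omega

theorem quot_mul (hg : GadicSeq g) (i : ℕ) : quot g i * g i = g (i + 1) :=
  Nat.div_mul_cancel (hg.2.2 i)

theorem two_le_quot (hg : GadicSeq g) (i : ℕ) : 2 ≤ quot g i := by
  have : 1 * g i < quot g i * g i := by
    rw [one_mul, hg.quot_mul]
    exact hg.1 (Nat.lt_succ_self i)
  exact Nat.lt_of_mul_lt_mul_right this

theorem dvd_of_le (hg : GadicSeq g) {i j : ℕ} (hij : i ≤ j) : g i ∣ g j := by
  induction j, hij using Nat.le_induction with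
  | base => rfl
  | succ j _ ih => exact ih.trans (hg.2.2 j)

theorem sum_range_quot_sub_one (hg : GadicSeq g) (k : ℕ) :
    ∑ i ∈ range k, (quot g i - 1) * g i = g k - 1 := by
  induction k with
  | zero => simp [hg.2.1]
  | succ k ih =>
    rw [sum_range_succ, ih, Nat.sub_one_mul, ← hg.quot_mul k]
    have := hg.pos k
    have : g k ≤ quot g k * g k := Nat.le_mul_of_pos_left _ (by have := hg.two_le_quot k; omega)
    omega

theorem digit_lt (hg : GadicSeq g) (i n : ℕ) : digit g i n < quot g i := by
  rw [digit, ← hg.quot_mul i, Nat.mod_mul_left_div_self]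
  exact Nat.mod_lt _ (by have := hg.two_le_quot i; omega)

@[simp]
theorem digit_zero (i : ℕ) : digit g i 0 = 0 := by
  simp [digit]

theorem pos_of_digit_ne_zero {i n : ℕ} (h : digit g i n ≠ 0) : 0 < n :=
  Nat.pos_of_ne_zero fun hn => h (by rw [hn, digit_zero])

theorem digit_eq_zero_of_lt (hg : GadicSeq g) {i n : ℕ} (h : n < i) : digit g i n = 0 :=
  Nat.div_eq_of_lt ((Nat.mod_le _ _).trans_lt (h.trans_le hg.1.le_apply))

theorem le_of_digit_ne_zero (hg : GadicSeq g) {i n : ℕ} (h : digit g i n ≠ 0) : i ≤ n :=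
  not_lt.1 (mt hg.digit_eq_zero_of_lt h)

theorem mod_succ (hg : GadicSeq g) (k n : ℕ) : n % g (k + 1) = n % g k + digit g k n * g k := by
  rw [digit, ← Nat.mod_mod_of_dvd n (hg.2.2 k)]
  exact (Nat.mod_add_div' _ _).symm

theorem mod_eq_sum_digit (hg : GadicSeq g) (n k : ℕ) :
    n % g k = ∑ i ∈ range k, digit g i n * g i := by
  induction k with
  | zero => simp [hg.2.1, Nat.mod_one]
  | succ k ih => rw [sum_range_succ, ← ih, hg.mod_succ]

theorem ext_digit (hg : GadicSeq g) {a b : ℕ} (h : ∀ i, digit g i a = digit g i b) : a = b := by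
  obtain ⟨K, ha, hb⟩ : ∃ K, a < g K ∧ b < g K :=
    ⟨a + b + 1, by have := hg.1.le_apply (x := a + b + 1); omega,
      by have := hg.1.le_apply (x := a + b + 1); omega⟩
  rw [← Nat.mod_eq_of_lt ha, ← Nat.mod_eq_of_lt hb, hg.mod_eq_sum_digit, hg.mod_eq_sum_digit]
  simp only [h]

theorem exists_digit_ne_zero (hg : GadicSeq g) {n : ℕ} (hn : 0 < n) : ∃ i, digit g i n ≠ 0 := by
  by_contra! h
  exact hn.ne' (hg.ext_digit fun i => by rw [h, digit_zero])

theorem sum_filter_lt_lt (hg : GadicSeq g) {F : Finset ℕ} {x : ℕ → ℕ}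
    (hx : ∀ j ∈ F, x j < quot g j) (k : ℕ) : ∑ j ∈ F with j < k, x j * g j < g k := by
  have hle : ∑ j ∈ F with j < k, x j * g j ≤ ∑ j ∈ range k, (quot g j - 1) * g j :=
    calc ∑ j ∈ F with j < k, x j * g j ≤ ∑ j ∈ F with j < k, (quot g j - 1) * g j :=
          sum_le_sum fun j hj =>
            Nat.mul_le_mul_right _ (Nat.le_sub_one_of_lt (hx j (mem_filter.1 hj).1))
      _ ≤ ∑ j ∈ range k, (quot g j - 1) * g j :=
          sum_le_sum_of_subset fun j hj => mem_range.2 (mem_filter.1 hj).2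
  rw [hg.sum_range_quot_sub_one] at hle
  have := hg.pos k
  omega

theorem sum_mod (hg : GadicSeq g) {F : Finset ℕ} {x : ℕ → ℕ} (hx : ∀ j ∈ F, x j < quot g j)
    (k : ℕ) : (∑ j ∈ F, x j * g j) % g k = ∑ j ∈ F with j < k, x j * g j := by
  obtain ⟨t, ht⟩ : g k ∣ ∑ j ∈ F with ¬j < k, x j * g j :=
    dvd_sum fun j hj => (hg.dvd_of_le (not_lt.1 (mem_filter.1 hj).2)).mul_left _
  rw [← sum_filter_add_sum_filter_not F (· < k), ht, Nat.add_mul_mod_self_left]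
  exact Nat.mod_eq_of_lt (hg.sum_filter_lt_lt hx k)

theorem digit_sum (hg : GadicSeq g) {F : Finset ℕ} {x : ℕ → ℕ} (hx : ∀ j ∈ F, x j < quot g j)
    (i : ℕ) : digit g i (∑ j ∈ F, x j * g j) = if i ∈ F then x i else 0 := by
  have hsplit : ∑ j ∈ F with j < i + 1, x j * g j
      = ∑ j ∈ F with j < i, x j * g j + if i ∈ F then x i * g i else 0 := by
    rw [sum_filter, sum_filter, ← sum_ite_eq' F i (fun j => x j * g j), ← sum_add_distrib]
    refine sum_congr rfl fun j _ => ?_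
    rcases lt_trichotomy j i with hji | rfl | hji
    · simp [hji, hji.ne, Nat.lt_succ_of_lt hji]
    · simp
    · simp [hji.ne', show ¬j < i by omega, show ¬j < i + 1 by omega]
  have hlt := hg.sum_filter_lt_lt hx i
  rw [digit, hg.sum_mod hx, hsplit]
  split_ifs
  · rw [Nat.add_mul_div_right _ _ (hg.pos i), Nat.div_eq_of_lt hlt, zero_add]
  · rw [add_zero, Nat.div_eq_of_lt hlt]

theorem exists_digit_eq (hg : GadicSeq g) (x : ℕ → ℕ) (F : Finset ℕ) (hx : ∀ i, x i < quot g i)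
    (hF : ∀ i ∉ F, x i = 0) : ∃ n, ∀ i, digit g i n = x i := by
  refine ⟨∑ j ∈ F, x j * g j, fun i => ?_⟩
  rw [hg.digit_sum fun j _ => hx j]
  split_ifs with hi
  · rfl
  · exact (hF i hi).symm

theorem digit_mul (hg : GadicSeq g) {c j : ℕ} (hc : c < quot g j) (i : ℕ) :
    digit g i (c * g j) = if i = j then c else 0 := by
  simpa using hg.digit_sum (F := {j}) (x := fun _ => c) (by simpa using hc) i

theorem mem_AG_iff (hg : GadicSeq g) {W : Set ℕ} {n : ℕ} :
    n ∈ AG g W ↔ 0 < n ∧ ∀ i, digit g i n ≠ 0 → i ∈ W := by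
  constructor
  · rintro ⟨F, x, ⟨j, hj⟩, hFW, hx, rfl⟩
    have hxq : ∀ j ∈ F, x j < quot g j := fun j hj => by
      have : x j ≤ quot g j - 1 := (hx j hj).2
      have := hg.two_le_quot j
      omega
    refine ⟨(Nat.mul_pos (hx j hj).1 (hg.pos j)).trans_le
      (single_le_sum (f := fun j => x j * g j) (fun _ _ => Nat.zero_le _) hj), fun i hi => ?_⟩
    rw [hg.digit_sum hxq] at hi
    by_contra hiW
    exact hi (if_neg fun hiF => hiW (hFW hiF))
  · rintro ⟨hn, hW⟩
    classical
    set F := (range (n + 1)).filter (fun i => digit g i n ≠ 0)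
    have hdigit : ∀ i, digit g i (∑ j ∈ F, digit g j n * g j) = digit g i n := fun i => by
      rw [hg.digit_sum fun j _ => hg.digit_lt j n]
      split_ifs with hi
      · rfl
      · simp only [F, mem_filter, mem_range, not_and, not_not] at hi
        by_cases hin : i < n + 1
        · exact (hi hin).symm
        · exact (hg.digit_eq_zero_of_lt (by omega)).symm
    have hsum := hg.ext_digit hdigit
    refine ⟨F, fun i => digit g i n, ?_, fun i hi => hW i (mem_filter.1 hi).2,
      fun j hj => ⟨Nat.one_le_iff_ne_zero.2 (mem_filter.1 hj).2,
        Nat.le_sub_one_of_lt (hg.digit_lt j n)⟩, hsum.symm⟩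
    by_contra hF
    rw [not_nonempty_iff_eq_empty.1 hF, sum_empty] at hsum
    omega

theorem digit_eq_zero_of_mem_AG (hg : GadicSeq g) {W : Set ℕ} {n i : ℕ} (hn : n ∈ AG g W)
    (hi : i ∉ W) : digit g i n = 0 := by
  by_contra h
  exact hi ((hg.mem_AG_iff.1 hn).2 i h)

theorem mul_mem_AG {W : Set ℕ} {j c : ℕ} (hj : j ∈ W) (hc : 1 ≤ c) (hcq : c < quot g j) :
    c * g j ∈ AG g W :=
  ⟨{j}, fun _ => c, singleton_nonempty j, by simpa using hj,
    by simpa using ⟨hc, Nat.le_sub_one_of_lt hcq⟩, by simp⟩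

theorem carry_le_one (hg : GadicSeq g) (a b k : ℕ) : carry g a b k ≤ 1 := by
  have := Nat.mod_lt a (hg.pos k)
  have := Nat.mod_lt b (hg.pos k)
  exact Nat.le_of_lt_succ (Nat.div_lt_of_lt_mul (by omega))

theorem carry_zero (hg : GadicSeq g) (a b : ℕ) : carry g a b 0 = 0 := by
  simp [carry, hg.2.1, Nat.mod_one]

theorem mod_add_mod_eq (a b k : ℕ) :
    a % g k + b % g k = (a + b) % g k + carry g a b k * g k := by
  rw [Nat.add_mod a b, carry]
  exact (Nat.mod_add_div' _ _).symm

theorem digit_add_add_carry (hg : GadicSeq g) (a b i : ℕ) :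
    digit g i a + digit g i b + carry g a b i
      = digit g i (a + b) + quot g i * carry g a b (i + 1) := by
  have h0 := mod_add_mod_eq (g := g) a b i
  have h1 := mod_add_mod_eq (g := g) a b (i + 1)
  rw [hg.mod_succ i a, hg.mod_succ i b, hg.mod_succ i (a + b), ← hg.quot_mul i] at h1
  apply Nat.eq_of_mul_eq_mul_right (hg.pos i)
  linarith

theorem carry_succ_eq_zero (hg : GadicSeq g) {a b i : ℕ}
    (h : digit g i a + digit g i b + carry g a b i < quot g i) : carry g a b (i + 1) = 0 := by
  have := hg.digit_add_add_carry a b i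
  rcases Nat.le_one_iff_eq_zero_or_eq_one.1 (hg.carry_le_one a b (i + 1)) with hc | hc
  · exact hc
  · rw [hc] at this
    omega

theorem digit_add_eq_zero (hg : GadicSeq g) {a b i : ℕ} (ha : digit g i a = 0)
    (hb : digit g i b = 0) (hc : carry g a b i = 0) : digit g i (a + b) = 0 := by
  have := hg.digit_add_add_carry a b i
  omega

theorem digit_add_of_disjoint (hg : GadicSeq g) {a b : ℕ}
    (h : ∀ i, digit g i a = 0 ∨ digit g i b = 0) (i : ℕ) :
    digit g i (a + b) = digit g i a + digit g i b := by
  have hc : ∀ i, carry g a b i = 0 := fun i => by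
    induction i with
    | zero => exact hg.carry_zero a b
    | succ i ih =>
      refine hg.carry_succ_eq_zero ?_
      have := hg.digit_lt i a
      have := hg.digit_lt i b
      rcases h i with h | h <;> omega
  have := hg.digit_add_add_carry a b i
  simp only [hc] at this
  omega

theorem carry_eq_zero_of_forall_lt (hg : GadicSeq g) {a b J : ℕ}
    (h : ∀ i < J, digit g i a = 0 ∧ digit g i b = 0 ∨ digit g i (a + b) = quot g i - 1) :
    carry g a b J = 0 := by
  induction J with
  | zero => exact hg.carry_zero a b
  | succ J ih =>
    have hJ := ih fun i hi => h i (by omega)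
    have := hg.two_le_quot J
    rcases h J (by omega) with ⟨ha, hb⟩ | hn
    · exact hg.carry_succ_eq_zero (by omega)
    · have hrec := hg.digit_add_add_carry a b J
      have := hg.digit_lt J a
      have := hg.digit_lt J b
      rcases Nat.le_one_iff_eq_zero_or_eq_one.1 (hg.carry_le_one a b (J + 1)) with hc | hc
      · exact hc
      · rw [hc] at hrec
        omega

theorem exists_add_eq_indicator (hg : GadicSeq g) (S : Set ℕ) (n : ℕ) :
    ∃ a b, a + b = n ∧ (∀ i, digit g i a = S.indicator (digit g · n) i) ∧
      ∀ i, digit g i b = Sᶜ.indicator (digit g · n) i := by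
  have hpart : ∀ T : Set ℕ, ∃ a, ∀ i, digit g i a = T.indicator (digit g · n) i := fun T =>
    hg.exists_digit_eq _ (range (n + 1))
      (fun i => (Set.indicator_le_self T _ i).trans_lt (hg.digit_lt i n))
      (fun i hi => by simp [hg.digit_eq_zero_of_lt (show n < i by simpa using hi)])
  obtain ⟨a, ha⟩ := hpart S
  obtain ⟨b, hb⟩ := hpart Sᶜ
  have hdisj : ∀ i, digit g i a = 0 ∨ digit g i b = 0 := fun i => by
    by_cases hi : i ∈ S <;> simp [ha, hb, hi]
  refine ⟨a, b, hg.ext_digit fun i => ?_, ha, hb⟩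
  rw [hg.digit_add_of_disjoint hdisj, ha, hb, Set.indicator_self_add_compl_apply]

theorem mem_AG_of_digit_eq_indicator (hg : GadicSeq g) {S W : Set ℕ} {n c : ℕ} (hc : 0 < c)
    (h : ∀ i, digit g i c = S.indicator (digit g · n) i) (hW : ∀ i ∈ S, digit g i n ≠ 0 → i ∈ W) :
    c ∈ AG g W := by
  refine hg.mem_AG_iff.2 ⟨hc, fun i hi => ?_⟩
  rw [h] at hi
  obtain ⟨hiS, hin⟩ := Set.indicator_apply_ne_zero.1 hi
  exact hW i hiS hin

theorem exists_add_mem_AG (hg : GadicSeq g) {W : Set ℕ} {n : ℕ} (hn : n ∈ AG g W)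
    (hpow : ∀ j, n ≠ g j) : ∃ a ∈ AG g W, ∃ b ∈ AG g W, a + b = n := by
  obtain ⟨hn0, hnW⟩ := hg.mem_AG_iff.1 hn
  obtain ⟨j, hj⟩ := hg.exists_digit_ne_zero hn0
  obtain ⟨a, b, hab, ha, hb⟩ := hg.exists_add_eq_indicator {j} n
  rcases Nat.eq_zero_or_pos b with rfl | hb0
  · have hcq := hg.digit_lt j n
    have hdigit : ∀ i, digit g i n = if i = j then digit g j n else 0 := fun i => by
      have := ha i
      rw [show a = n by omega] at this
      rw [this]
      by_cases hij : i = j <;> simp [hij]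
    have hnc : n = digit g j n * g j := hg.ext_digit fun i => by rw [hg.digit_mul hcq, hdigit i]
    have hc1 : digit g j n ≠ 1 := fun h => hpow j (by rw [hnc, h, one_mul])
    refine ⟨1 * g j, mul_mem_AG (hnW j hj) le_rfl (by omega), (digit g j n - 1) * g j,
      mul_mem_AG (hnW j hj) (by omega) (by omega), ?_⟩
    rw [← add_mul, Nat.add_sub_of_le (Nat.one_le_iff_ne_zero.2 hj), ← hnc]
  · have ha0 : 0 < a := pos_of_digit_ne_zero (i := j) (by rw [ha]; simpa using hj)
    exact ⟨a, hg.mem_AG_of_digit_eq_indicator ha0 ha fun i _ => hnW i, b,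
      hg.mem_AG_of_digit_eq_indicator hb0 hb fun i _ => hnW i, hab⟩

theorem exists_add_mem_union (hg : GadicSeq g) {W₀ W₁ : Set ℕ} (hunion : W₀ ∪ W₁ = Set.univ)
    {n : ℕ} (hn : 2 ≤ n) : ∃ a ∈ AG g W₀ ∪ AG g W₁, ∃ b ∈ AG g W₀ ∪ AG g W₁, a + b = n := by
  have hW : ∀ i, i ∈ W₀ ∨ i ∈ W₁ := fun i => Set.eq_univ_iff_forall.1 hunion i
  have hsingle : ∀ {c k}, 1 ≤ c → c < quot g k → c * g k ∈ AG g W₀ ∪ AG g W₁ := fun hc hcq =>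
    (hW _).elim (fun hk => Or.inl (mul_mem_AG hk hc hcq)) (fun hk => Or.inr (mul_mem_AG hk hc hcq))
  by_cases hpow : ∃ j, n = g j
  · obtain ⟨j, rfl⟩ := hpow
    obtain ⟨k, rfl⟩ : ∃ k, j = k + 1 :=
      Nat.exists_eq_succ_of_ne_zero (by rintro rfl; rw [hg.2.1] at hn; omega)
    have hq := hg.two_le_quot k
    refine ⟨1 * g k, hsingle le_rfl (by omega), (quot g k - 1) * g k,
      hsingle (by omega) (by omega), ?_⟩
    rw [← add_mul, ← hg.quot_mul k]
    congr 1
    omega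
  push Not at hpow
  obtain ⟨a, b, hab, ha, hb⟩ := hg.exists_add_eq_indicator W₀ n
  rcases Nat.eq_zero_or_pos a with rfl | ha0
  · have hnW : n ∈ AG g W₁ := by
      rw [← show b = n by omega]
      exact hg.mem_AG_of_digit_eq_indicator (by omega) hb fun i hi _ => (hW i).resolve_left hi
    obtain ⟨a', ha', b', hb', h⟩ := hg.exists_add_mem_AG hnW hpow
    exact ⟨a', Or.inr ha', b', Or.inr hb', h⟩
  rcases Nat.eq_zero_or_pos b with rfl | hb0
  · have hnW : n ∈ AG g W₀ := by
      rw [← show a = n by omega]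
      exact hg.mem_AG_of_digit_eq_indicator ha0 ha fun i hi _ => hi
    obtain ⟨a', ha', b', hb', h⟩ := hg.exists_add_mem_AG hnW hpow
    exact ⟨a', Or.inl ha', b', Or.inl hb', h⟩
  exact ⟨a, Or.inl (hg.mem_AG_of_digit_eq_indicator ha0 ha fun i hi _ => hi), b,
    Or.inr (hg.mem_AG_of_digit_eq_indicator hb0 hb fun i hi _ => (hW i).resolve_left hi), hab⟩

theorem digit_add_of_mem_AG_compl (hg : GadicSeq g) {W : Set ℕ} {a b : ℕ} (ha : a ∈ AG g W)
    (hb : b ∈ AG g Wᶜ) (i : ℕ) : digit g i (a + b) = digit g i a + digit g i b :=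
  hg.digit_add_of_disjoint (fun i => by
    by_cases hi : i ∈ W
    · exact Or.inr (hg.digit_eq_zero_of_mem_AG hb (Set.notMem_compl_iff.2 hi))
    · exact Or.inl (hg.digit_eq_zero_of_mem_AG ha hi)) i

theorem eq_of_add_eq_add (hg : GadicSeq g) {W : Set ℕ} {a a' b b' : ℕ} (ha : a ∈ AG g W)
    (ha' : a' ∈ AG g W) (hb : b ∈ AG g Wᶜ) (hb' : b' ∈ AG g Wᶜ) (h : a + b = a' + b') :
    a = a' := by
  refine hg.ext_digit fun i => ?_
  have hsum := hg.digit_add_of_mem_AG_compl ha hb i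
  rw [h, hg.digit_add_of_mem_AG_compl ha' hb' i] at hsum
  by_cases hi : i ∈ W
  · have := hg.digit_eq_zero_of_mem_AG hb (Set.notMem_compl_iff.2 hi)
    have := hg.digit_eq_zero_of_mem_AG hb' (Set.notMem_compl_iff.2 hi)
    omega
  · rw [hg.digit_eq_zero_of_mem_AG ha hi, hg.digit_eq_zero_of_mem_AG ha' hi]

theorem digit_succ_add_eq_zero (hg : GadicSeq g) {W : Set ℕ} {a b m : ℕ} (ha : a ∈ AG g W)
    (hb : b ∈ AG g W) (hm : m ∉ W) (hm' : m + 1 ∉ W) : digit g (m + 1) (a + b) = 0 := by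
  refine hg.digit_add_eq_zero (hg.digit_eq_zero_of_mem_AG ha hm')
    (hg.digit_eq_zero_of_mem_AG hb hm') (hg.carry_succ_eq_zero ?_)
  rw [hg.digit_eq_zero_of_mem_AG ha hm, hg.digit_eq_zero_of_mem_AG hb hm]
  have := hg.carry_le_one a b m
  have := hg.two_le_quot m
  omega

theorem digit_add_eq_zero_of_forall_lt (hg : GadicSeq g) {U : Set ℕ} {a b J : ℕ}
    (ha : a ∈ AG g U) (hb : b ∈ AG g U) (hJ : J ∉ U)
    (h : ∀ i < J, i ∈ U → digit g i (a + b) = quot g i - 1) : digit g J (a + b) = 0 :=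
  hg.digit_add_eq_zero (hg.digit_eq_zero_of_mem_AG ha hJ) (hg.digit_eq_zero_of_mem_AG hb hJ)
    (hg.carry_eq_zero_of_forall_lt fun i hi => by
      by_cases hiU : i ∈ U
      · exact Or.inr (h i hi hiU)
      · exact Or.inl ⟨hg.digit_eq_zero_of_mem_AG ha hiU, hg.digit_eq_zero_of_mem_AG hb hiU⟩)

theorem exists_mem_AG_digit (hg : GadicSeq g) {U : Set ℕ} {m : ℕ} (hm : m ∈ U) (J : ℕ) :
    ∃ b ∈ AG g U, digit g m b ≠ 0 ∧ ∀ i < J, i ∈ U → digit g i b = quot g i - 1 := by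
  classical
  obtain ⟨b, hb⟩ := hg.exists_digit_eq
    (fun i => if i ∈ U ∧ (i < J ∨ i = m) then quot g i - 1 else 0) (range (max J m + 1))
    (fun i => by have := hg.two_le_quot i; split_ifs <;> omega)
    (fun i hi => if_neg fun h => hi (mem_range.2 (by omega)))
  have hbm : digit g m b ≠ 0 := by
    rw [hb, if_pos ⟨hm, Or.inr rfl⟩]
    have := hg.two_le_quot m
    omega
  refine ⟨b, hg.mem_AG_iff.2 ⟨pos_of_digit_ne_zero hbm, fun i hi => ?_⟩, hbm,
    fun i hi hiU => by rw [hb, if_pos ⟨hiU, Or.inl hi⟩]⟩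
  by_contra hiU
  exact hi (by rw [hb, if_neg fun h => hiU h.1])

theorem frequently_forall_add_eq (hg : GadicSeq g) {W : Set ℕ}
    (hpairs : {m : ℕ | m ∈ Wᶜ ∧ m + 1 ∈ Wᶜ}.Infinite) {a₀ : ℕ} (ha₀ : a₀ ∈ AG g W) :
    ∃ᶠ n in Filter.atTop, ∀ a ∈ AG g W ∪ AG g Wᶜ, ∀ b ∈ AG g W ∪ AG g Wᶜ, a + b = n →
      a = a₀ ∨ b = a₀ := by
  refine Filter.frequently_atTop.2 fun N => ?_
  obtain ⟨J, hJ⟩ := hg.exists_digit_ne_zero (hg.mem_AG_iff.1 ha₀).1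
  have hJW : J ∈ W := (hg.mem_AG_iff.1 ha₀).2 J hJ
  obtain ⟨m, ⟨hm, hm'⟩, hmN⟩ := hpairs.exists_gt N
  obtain ⟨b₀, hb₀, hb₀m, hb₀J⟩ := hg.exists_mem_AG_digit hm' J
  have hn := hg.digit_add_of_mem_AG_compl ha₀ hb₀
  refine ⟨a₀ + b₀, by have := hg.le_of_digit_ne_zero hb₀m; omega, ?_⟩
  rintro a (ha | ha) b (hb | hb) hab
  · have := hg.digit_succ_add_eq_zero ha hb hm hm'
    rw [hab, hn] at this
    omega
  · exact Or.inl (hg.eq_of_add_eq_add ha ha₀ hb hb₀ hab)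
  · exact Or.inr (hg.eq_of_add_eq_add hb ha₀ ha hb₀ (by omega))
  · have := hg.digit_add_eq_zero_of_forall_lt ha hb (Set.notMem_compl_iff.2 hJW) fun i hi hiU => by
      rw [hab, hn, hg.digit_eq_zero_of_mem_AG ha₀ hiU, hb₀J i hi hiU, zero_add]
    rw [hab, hn] at this
    omega

end GadicSeq

theorem isSumOf_two_iff {A : Set ℕ} {n : ℕ} : IsSumOf A 2 n ↔ ∃ a ∈ A, ∃ b ∈ A, a + b = n := by
  constructor
  · rintro ⟨f, hf, rfl⟩
    exact ⟨f 0, hf 0, f 1, hf 1, (Fin.sum_univ_two f).symm⟩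
  · rintro ⟨a, ha, b, hb, rfl⟩
    exact ⟨![a, b], fun i => by fin_cases i <;> assumption, by simp⟩

theorem AsympBasis.mem_of_subset_of_frequently {A B : Set ℕ} {a₀ : ℕ} (hB : AsympBasis 2 B)
    (hBA : B ⊆ A)
    (h : ∃ᶠ n in Filter.atTop, ∀ a ∈ A, ∀ b ∈ A, a + b = n → a = a₀ ∨ b = a₀) : a₀ ∈ B := by
  obtain ⟨N, hN⟩ := hB
  obtain ⟨n, hnN, hforced⟩ := Filter.frequently_atTop.1 h N
  obtain ⟨a, ha, b, hb, hab⟩ := isSumOf_two_iff.1 (hN n hnN)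
  rcases hforced a (hBA ha) b (hBA hb) hab with rfl | rfl
  · exact ha
  · exact hb

theorem gadic_minimal_asymptotic_basis_order_two_general
    (W₀ W₁ : Set ℕ)
    (hdisj : Disjoint W₀ W₁) (hunion : W₀ ∪ W₁ = Set.univ)
    (hpairs₀ : {m : ℕ | m ∈ W₀ ∧ m + 1 ∈ W₀}.Infinite)
    (hpairs₁ : {m : ℕ | m ∈ W₁ ∧ m + 1 ∈ W₁}.Infinite)
    (g : ℕ → ℕ) (hg : GadicSeq g) :
    MinAsympBasis 2 (AG g W₀ ∪ AG g W₁) := by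
  have hcompl : IsCompl W₀ W₁ := ⟨hdisj, codisjoint_iff.2 hunion⟩
  refine ⟨⟨2, fun n hn => isSumOf_two_iff.2 (hg.exists_add_mem_union hunion hn)⟩,
    fun B hB hbasis => ?_⟩
  obtain ⟨a₀, ha₀, ha₀B⟩ := Set.exists_of_ssubset hB
  refine ha₀B (hbasis.mem_of_subset_of_frequently hB.subset ?_)
  rcases ha₀ with ha₀ | ha₀
  · rw [← hcompl.compl_eq] at hpairs₁ ⊢
    exact hg.frequently_forall_add_eq hpairs₁ ha₀
  · rw [← hcompl.symm.compl_eq] at hpairs₀ ⊢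
    rw [Set.union_comm]
    exact hg.frequently_forall_add_eq hpairs₀ ha₀

theorem gadic_minimal_asymptotic_basis_order_two
    (W₀ W₁ : Set ℕ) (hW₀ : W₀.Nonempty) (hW₁ : W₁.Nonempty)
    (hdisj : Disjoint W₀ W₁) (hunion : W₀ ∪ W₁ = Set.univ)
    (hpairs₀ : {m : ℕ | m ∈ W₀ ∧ m + 1 ∈ W₀}.Infinite)
    (hpairs₁ : {m : ℕ | m ∈ W₁ ∧ m + 1 ∈ W₁}.Infinite)
    (g : ℕ → ℕ) (hg : GadicSeq g) :
    MinAsympBasis 2 (AG g W₀ ∪ AG g W₁) :=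
  gadic_minimal_asymptotic_basis_order_two_general W₀ W₁ hdisj hunion hpairs₀ hpairs₁ g hg
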